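/- Let A = [[1,1],[0,1]] and B = [[1,0],[-1,1]] in SL_2(Z/p) for a prime p > 3. Then (A^{(p+1)/2} B^4)^2 = (AB)^3, and this common value is the negative identity matrix -I_2. -/
import Mathlib

lemma pow_A {R : Type*} [CommRing R] (n : ℕ) :
    (!![1, 1; 0, 1] : Matrix (Fin 2) (Fin 2) R) ^ n = !![1, (n : R); 0, 1] := by
  induction n with
  | zero => simp [Matrix.one_fin_two]
  | succ k ih =>
      rw [pow_succ, ih]
      push_cast
      simp [Matrix.mul_fin_two]
      ring_nf

/-- For a prime `p > 3`, with `A = [[1,1],[0,1]]` and `B = [[1,0],[-1,1]]`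
over `ℤ/p`, one has `(A^{(p+1)/2} B^4)^2 = (AB)^3` and this common value is `-I`. -/
theorem mod_p_involution_identity (p : ℕ) (hp : p.Prime) (h3 : 3 < p) :
    ((!![1, 1; 0, 1] : Matrix (Fin 2) (Fin 2) (ZMod p)) ^ ((p + 1) / 2) *
          (!![1, 0; -1, 1] : Matrix (Fin 2) (Fin 2) (ZMod p)) ^ 4) ^ 2 =
        ((!![1, 1; 0, 1] : Matrix (Fin 2) (Fin 2) (ZMod p)) * !![1, 0; -1, 1]) ^ 3 ∧
      ((!![1, 1; 0, 1] : Matrix (Fin 2) (Fin 2) (ZMod p)) * !![1, 0; -1, 1]) ^ 3 = -1 := by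
  have hodd : Odd p := hp.odd_of_ne_two (by omega)
  set c : ZMod p := (((p + 1) / 2 : ℕ) : ZMod p) with hc
  have h2c : (2 : ZMod p) * c = 1 := by
    have h : ((p + 1) / 2) * 2 = p + 1 := by
      obtain ⟨k, hk⟩ := hodd; omega
    rw [hc, mul_comm]
    have := congrArg (fun n : ℕ => (n : ZMod p)) h
    push_cast at this
    rw [this]
    simp
  clear_value c
  have h3cube : ((!![1, 1; 0, 1] : Matrix (Fin 2) (Fin 2) (ZMod p)) * !![1, 0; -1, 1]) ^ 3 = -1 := by
    ext i j
    fin_cases i <;> fin_cases j <;>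
      simp [pow_succ, Matrix.mul_fin_two, Matrix.one_fin_two]
  refine ⟨?_, h3cube⟩
  rw [h3cube, pow_A]
  ext i j
  fin_cases i <;> fin_cases j <;>
    simp [pow_succ, Matrix.mul_fin_two, Matrix.one_fin_two, ← hc] <;>
    first
      | linear_combination (8*c-2)*h2c
      | linear_combination (-2*c)*h2c
      | linear_combination (8:ZMod p)*h2c
      | linear_combination (-2:ZMod p)*h2c
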